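/- If p(z) is a complex polynomial of degree n with all its zeros in the open unit disk |z| < 1, then max_{|z|=1} |p'(z)| ≥ (n/2) · max_{|z|=1} |p(z)|. -/

import Mathlib

/-!
At a point `z` of the unit circle where `p z ≠ 0`, the logarithmic derivative gives
`z p'(z) / p(z) = ∑ z / (z - r)` over the roots `r` of `p`. For `|r| ≤ 1` the point `z / (z - r)`
lies in the half-plane `Re w ≥ 1/2`, so `|p'(z)| ≥ Re (z p'(z) / p(z)) |p(z)| ≥ (n/2) |p(z)|`.
Taking suprema over the circle gives the inequality.
-/

open Polynomial

noncomputable def maxMod (p : Polynomial ℂ) (c : ℝ) : ℝ :=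
  sSup ((fun z => ‖p.eval z‖) '' {z : ℂ | ‖z‖ = c})

noncomputable def minMod (p : Polynomial ℂ) (c : ℝ) : ℝ :=
  sInf ((fun z => ‖p.eval z‖) '' {z : ℂ | ‖z‖ = c})

noncomputable def polarDeriv (p : Polynomial ℂ) (α : ℂ) : Polynomial ℂ :=
  C (p.natDegree : ℂ) * p + (C α - X) * derivative p

theorem Complex.one_half_le_re_div_sub {z r : ℂ} (hz : ‖z‖ = 1) (hr : ‖r‖ ≤ 1) (hzr : z ≠ r) :
    1 / 2 ≤ (z / (z - r)).re := by
  have hpos : 0 < normSq (z - r) := normSq_pos.mpr (sub_ne_zero.mpr hzr)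
  have key : normSq (z - r) ≤ 2 * (z * (starRingEnd ℂ) (z - r)).re := by
    have h : normSq (z - (z - r)) ≤ normSq z := by
      simp only [sub_sub_cancel, normSq_eq_norm_sq, hz]
      nlinarith [norm_nonneg r]
    rw [normSq_sub] at h
    linarith
  rw [div_re, ← add_div, le_div_iff₀ hpos]
  simp only [mul_re, conj_re, conj_im] at key
  linarith

theorem Polynomial.natDegree_div_two_mul_norm_eval_le_norm_eval_derivative {p : ℂ[X]}
    (hroots : ∀ r, p.IsRoot r → ‖r‖ ≤ 1) {z : ℂ} (hz : ‖z‖ = 1) :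
    (p.natDegree / 2 : ℝ) * ‖p.eval z‖ ≤ ‖(derivative p).eval z‖ := by
  by_cases hpz : p.eval z = 0
  · simp [hpz]
  have hp : p ≠ 0 := by rintro rfl; simp at hpz
  have hre : ∀ x ∈ p.roots.map (fun r ↦ (z * (1 / (z - r))).re), 1 / 2 ≤ x := by
    simp only [Multiset.mem_map, mem_roots hp]
    rintro _ ⟨r, hr, rfl⟩
    rw [mul_one_div]
    exact Complex.one_half_le_re_div_sub hz (hroots r hr) (by rintro rfl; exact hpz hr)
  have hsum : (p.natDegree / 2 : ℝ) ≤ (z * (p.roots.map fun r ↦ 1 / (z - r)).sum).re := by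
    have := Multiset.card_nsmul_le_sum hre
    rw [Multiset.card_map, IsAlgClosed.card_roots_eq_natDegree, nsmul_eq_mul] at this
    rw [← Multiset.sum_map_mul_left, ← Complex.coe_reAddGroupHom, map_multiset_sum,
      Multiset.map_map, Complex.coe_reAddGroupHom]
    simpa only [div_eq_mul_one_div (p.natDegree : ℝ), Function.comp_def] using this
  calc (p.natDegree / 2 : ℝ) * ‖p.eval z‖
      ≤ ‖z * (p.roots.map fun r ↦ 1 / (z - r)).sum‖ * ‖p.eval z‖ := by
        gcongr
        exact hsum.trans (Complex.re_le_norm _)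
    _ = ‖(derivative p).eval z‖ := by
        rw [(IsAlgClosed.splits p).eval_derivative_eq_eval_mul_sum hpz, norm_mul, norm_mul, hz,
          one_mul, mul_comm]

theorem norm_eval_le_maxMod (p : ℂ[X]) {c : ℝ} {z : ℂ} (hz : ‖z‖ = c) :
    ‖p.eval z‖ ≤ maxMod p c := by
  have hK : IsCompact {z : ℂ | ‖z‖ = c} := by
    convert isCompact_sphere (0 : ℂ) c using 1
    exact Set.ext fun _ ↦ mem_sphere_zero_iff_norm.symm
  exact le_csSup ((hK.image (by fun_prop)).bddAbove) ⟨z, hz, rfl⟩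

theorem mul_maxMod_le (p : ℂ[X]) {a c M : ℝ} (ha : 0 ≤ a) (hc : 0 ≤ c)
    (h : ∀ z : ℂ, ‖z‖ = c → a * ‖p.eval z‖ ≤ M) : a * maxMod p c ≤ M := by
  obtain ⟨z₀, hz₀⟩ : ∃ z : ℂ, ‖z‖ = c := ⟨c, by simp [hc]⟩
  rw [maxMod, ← smul_eq_mul, ← Real.sSup_smul_of_nonneg ha]
  refine csSup_le ⟨_, Set.smul_mem_smul_set ⟨z₀, hz₀, rfl⟩⟩ ?_
  rintro _ ⟨_, ⟨z, hz, rfl⟩, rfl⟩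
  exact h z hz

theorem stmt2 (p : Polynomial ℂ) (n : ℕ) (hn : p.natDegree = n)
    (hz : ∀ z : ℂ, p.IsRoot z → ‖z‖ < 1) :
    (n / 2 : ℝ) * maxMod p 1 ≤ maxMod (derivative p) 1 := by
  subst hn
  refine mul_maxMod_le p (by positivity) zero_le_one fun z hz1 ↦ ?_
  calc (p.natDegree / 2 : ℝ) * ‖p.eval z‖
      ≤ ‖(derivative p).eval z‖ :=
        natDegree_div_two_mul_norm_eval_le_norm_eval_derivative (fun r hr ↦ (hz r hr).le) hz1
    _ ≤ maxMod (derivative p) 1 := norm_eval_le_maxMod _ hz1
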